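/- Soundness of the rule s(ρ) (case of the soundness lemma): Let R be a rule set, ρ = ∀x⃗y⃗ (β(x⃗,y⃗) → ∃z⃗ α(y⃗,z⃗)) ∈ R, Γ and Δ finite sets of formulas, and suppose the variables z⃗ do not occur in Γ, β(x⃗,y⃗), or Δ. If the formula f(Γ, β(x⃗,y⃗), α(y⃗,z⃗) ⊢ Δ) = (⋀Γ ∧ β(x⃗,y⃗) ∧ α(y⃗,z⃗)) → ⋁Δ is R-valid, then the formula f(Γ, β(x⃗,y⃗) ⊢ Δ) = (⋀Γ ∧ β(x⃗,y⃗)) → ⋁Δ is R-valid. -/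
import Mathlib


/- ## Syntax: terms, atoms, first-order formulas -/

/-- Terms: constants `C` and variables `V` (both indexed by ℕ, disjoint by construction). -/
inductive Tm where
  | const : ℕ → Tm
  | var : ℕ → Tm
deriving DecidableEq

/-- An atom `p(t₁,…,tₙ)`.  Predicate `0` is reserved for the special unary predicate `⊤`;
    predicates of the language `𝓛` are the predicates `p ≠ 0`. -/
structure Atom where
  pred : ℕ
  args : List Tm
deriving DecidableEq

/-- First-order formulas, generated from atoms by `¬`, `∧` and `∃x`. -/
inductive Fml where
  | atom : ℕ → List Tm → Fml
  | not : Fml → Fml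
  | and : Fml → Fml → Fml
  | ex : ℕ → Fml → Fml
deriving DecidableEq

def Atom.toFml (a : Atom) : Fml := Fml.atom a.pred a.args

/-- Extension of a substitution on variables to all terms (constants are fixed). -/
def Tm.app (μ : ℕ → Tm) : Tm → Tm
  | Tm.const c => Tm.const c
  | Tm.var x => μ x

def Atom.map (f : Tm → Tm) (a : Atom) : Atom := ⟨a.pred, a.args.map f⟩

def Atom.subst (μ : ℕ → Tm) (a : Atom) : Atom := a.map (Tm.app μ)

/-- `Tm.subst t x` substitutes the term `t` for the variable `x`. -/
def Tm.subst (t : Tm) (x : ℕ) : Tm → Tm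
  | Tm.const c => Tm.const c
  | Tm.var y => if y = x then t else Tm.var y

/-- `Fml.subst t x φ` is `φ(t/x)`: substitute `t` for every free occurrence of `x` in `φ`. -/
def Fml.subst (t : Tm) (x : ℕ) : Fml → Fml
  | Fml.atom p ts => Fml.atom p (ts.map (Tm.subst t x))
  | Fml.not φ => Fml.not (Fml.subst t x φ)
  | Fml.and φ ψ => Fml.and (Fml.subst t x φ) (Fml.subst t x ψ)
  | Fml.ex y φ => if y = x then Fml.ex y φ else Fml.ex y (Fml.subst t x φ)

/-- Free variables of a formula. -/
def Fml.fv : Fml → Set ℕ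
  | Fml.atom _ ts => {x | Tm.var x ∈ ts}
  | Fml.not φ => φ.fv
  | Fml.and φ ψ => φ.fv ∪ ψ.fv
  | Fml.ex y φ => φ.fv \ {y}

/-- Free variables and constants occurring in a formula. -/
def Fml.tms : Fml → Set Tm
  | Fml.atom _ ts => {t | t ∈ ts}
  | Fml.not φ => φ.tms
  | Fml.and φ ψ => φ.tms ∪ ψ.tms
  | Fml.ex y φ => φ.tms \ {Tm.var y}

/-- A formula of the language `𝓛`, i.e. not mentioning the special predicate `⊤`. -/
def Fml.noTop : Fml → Prop
  | Fml.atom p _ => p ≠ 0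
  | Fml.not φ => φ.noTop
  | Fml.and φ ψ => φ.noTop ∧ ψ.noTop
  | Fml.ex _ φ => φ.noTop

def Atom.tms (a : Atom) : Set Tm := {t | t ∈ a.args}

/-- Terms occurring in an instance. -/
def itms (I : Set Atom) : Set Tm := ⋃ a ∈ I, a.tms

/-- `T(Γ)`: free variables and constants occurring in a set of formulas. -/
def tmsOf (S : Set Fml) : Set Tm := ⋃ φ ∈ S, φ.tms

/-- The atom `⊤(c)`. -/
def topAtom (c : ℕ) : Atom := ⟨0, [Tm.const c]⟩

/-- `I^⊤ = I ∪ {⊤(c) | c ∈ C}`. -/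
def mfy (I : Set Atom) : Set Atom := I ∪ Set.range topAtom

/-- An instance is an interpretation iff `I^⊤ = I`. -/
def IsInterp (I : Set Atom) : Prop := mfy I = I

/-- An assignment into a set of terms: maps each variable into `T` (constants are fixed via `Tm.app`). -/
def IsAsg (T : Set Tm) (μ : ℕ → Tm) : Prop := ∀ x : ℕ, μ x ∈ T

/- ## Semantics -/

/-- Satisfaction `I,μ ⊨ φ`. -/
def Sat (I : Set Atom) : (ℕ → Tm) → Fml → Prop
  | μ, Fml.atom p ts => (⟨p, ts.map (Tm.app μ)⟩ : Atom) ∈ I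
  | μ, Fml.not φ => ¬ Sat I μ φ
  | μ, Fml.and φ ψ => Sat I μ φ ∧ Sat I μ ψ
  | μ, Fml.ex x φ => ∃ t ∈ itms I, Sat I (Function.update μ x t) φ

/-- `I ⊨ φ`: satisfaction under every `I`-assignment. -/
def SatF (I : Set Atom) (φ : Fml) : Prop :=
  ∀ μ : ℕ → Tm, IsAsg (itms I) μ → Sat I μ φ

/-- Satisfaction under some `I`-assignment (used for instances that need not be interpretations). -/
def SatI (I : Set Atom) (φ : Fml) : Prop :=
  ∃ μ : ℕ → Tm, IsAsg (itms I) μ ∧ Sat I μ φ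

/- ## Existential rules -/

/-- An existential rule `ρ = ∀x⃗y⃗ (β(x⃗,y⃗) → ∃z⃗ α(y⃗,z⃗))`: `body` is `β`, `head` is `α`
    (conjunctions of atoms identified with finite sets of atoms), and `evars` is `z⃗`. -/
structure ERule where
  body : Finset Atom
  head : Finset Atom
  evars : Finset ℕ
  body_nonempty : body.Nonempty
  head_nonempty : head.Nonempty
  body_noTop : ∀ a ∈ body, a.pred ≠ 0
  head_noTop : ∀ a ∈ head, a.pred ≠ 0
  body_evars : ∀ a ∈ body, ∀ z ∈ evars, Tm.var z ∉ a.args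
  head_frontier : ∀ a ∈ head, ∀ x : ℕ, Tm.var x ∈ a.args → x ∉ evars →
    ∃ b ∈ body, Tm.var x ∈ b.args

/-- `I ⊨ ρ` for an existential rule `ρ` (satisfaction of its universal closure). -/
def SatRule (I : Set Atom) (ρ : ERule) : Prop :=
  ∀ μ : ℕ → Tm, IsAsg (itms I) μ → (∀ a ∈ ρ.body, Atom.subst μ a ∈ I) →
    ∃ ν : ℕ → Tm, IsAsg (itms I) ν ∧ (∀ x : ℕ, x ∉ ρ.evars → ν x = μ x) ∧
      ∀ a ∈ ρ.head, Atom.subst ν a ∈ I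

/-- A database: a finite set of ground atoms (over the predicates of `𝓛`). -/
def IsDatabase (D : Finset Atom) : Prop :=
  ∀ a ∈ D, a.pred ≠ 0 ∧ ∀ t ∈ a.args, ∃ c : ℕ, t = Tm.const c

/-- `I ⊨ D ∪ R`. -/
def Models (I : Set Atom) (D : Finset Atom) (R : Set ERule) : Prop :=
  (∀ a ∈ D, SatF I a.toFml) ∧ ∀ ρ ∈ R, SatRule I ρ

/-- Conjunctions of atoms (over predicates of `𝓛`). -/
inductive ConjAtoms : Fml → Prop
  | atom (p : ℕ) (ts : List Tm) : p ≠ 0 → ConjAtoms (Fml.atom p ts)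
  | and {φ ψ : Fml} : ConjAtoms φ → ConjAtoms ψ → ConjAtoms (Fml.and φ ψ)

/-- A Boolean conjunctive query `∃x⃗ q(x⃗)`. -/
inductive IsBCQ : Fml → Prop
  | base {φ : Fml} : ConjAtoms φ → IsBCQ φ
  | ex {φ : Fml} (x : ℕ) : IsBCQ φ → IsBCQ (Fml.ex x φ)

/-- `(D,R) ⊨ q`. -/
def KBEntails (D : Finset Atom) (R : Set ERule) (q : Fml) : Prop :=
  ∀ I : Set Atom, IsInterp I → Models I D R → SatF I q

/- ## Sequent calculus G3(R) -/

/-- The instantiated body `β(t⃗,t⃗')` of a rule, as a finite set of formulas. -/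
def bodyImg (ρ : ERule) (σ : ℕ → Tm) : Finset Fml :=
  ρ.body.image (fun a => (Atom.subst σ a).toFml)

/-- The instantiated head `α(t⃗',z⃗)` of a rule, as a finite set of formulas. -/
def headImg (ρ : ERule) (ν : ℕ → Tm) : Finset Fml :=
  ρ.head.image (fun a => (Atom.subst ν a).toFml)

/-- A correct application of the sequent rule `s(ρ)` with premise `Γ' ⊢ Δ` and conclusion `Γ ⊢ Δ`:
    `σ` instantiates `x⃗,y⃗`, the variables `z⃗` are mapped by `ν` to fresh variables
    (not occurring in the conclusion), `Γ` contains the instantiated body, and `Γ'` additionally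
    contains the instantiated head. -/
def ERApp (ρ : ERule) (σ ν : ℕ → Tm) (Γ' Γ Δ : Finset Fml) : Prop :=
  (∀ x : ℕ, x ∉ ρ.evars → ν x = σ x) ∧
  (∀ z ∈ ρ.evars, ∃ v : ℕ, ν z = Tm.var v ∧ (∀ χ ∈ Γ, v ∉ χ.fv) ∧ (∀ χ ∈ Δ, v ∉ χ.fv)) ∧
  (∀ z ∈ ρ.evars, ∀ z' ∈ ρ.evars, ν z = ν z' → z = z') ∧
  bodyImg ρ σ ⊆ Γ ∧
  Γ' = Γ ∪ headImg ρ ν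

def ERStepR (ρ : ERule) (Γ' Γ Δ : Finset Fml) : Prop :=
  ∃ σ ν : ℕ → Tm, ERApp ρ σ ν Γ' Γ Δ

def ERStep (R : Set ERule) (Γ' Γ Δ : Finset Fml) : Prop :=
  ∃ ρ ∈ R, ERStepR ρ Γ' Γ Δ

/-- Provability in the sequent calculus `G3(R)` (sequents are pairs of finite sets of formulas;
    an inhabitant corresponds to a proof, i.e. a finite derivation tree whose leaves are
    instances of the initial rule `(id)`). -/
inductive G3P (R : Set ERule) : Finset Fml → Finset Fml → Prop
  | ax {Γ Δ : Finset Fml} (p : ℕ) (ts : List Tm) :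
      Fml.atom p ts ∈ Γ → Fml.atom p ts ∈ Δ → G3P R Γ Δ
  | negL {Γ Δ : Finset Fml} (φ : Fml) :
      G3P R Γ (insert φ Δ) → G3P R (insert (Fml.not φ) Γ) Δ
  | negR {Γ Δ : Finset Fml} (φ : Fml) :
      G3P R (insert φ Γ) Δ → G3P R Γ (insert (Fml.not φ) Δ)
  | andL {Γ Δ : Finset Fml} (φ ψ : Fml) :
      G3P R (insert φ (insert ψ Γ)) Δ → G3P R (insert (Fml.and φ ψ) Γ) Δ
  | andR {Γ Δ : Finset Fml} (φ ψ : Fml) :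
      G3P R Γ (insert φ Δ) → G3P R Γ (insert ψ Δ) → G3P R Γ (insert (Fml.and φ ψ) Δ)
  | exL {Γ Δ : Finset Fml} (x y : ℕ) (φ : Fml) :
      (∀ χ ∈ Γ, y ∉ χ.fv) → (∀ χ ∈ Δ, y ∉ χ.fv) → y ∉ (Fml.ex x φ).fv →
      G3P R (insert (Fml.subst (Tm.var y) x φ) Γ) Δ → G3P R (insert (Fml.ex x φ) Γ) Δ
  | exR {Γ Δ : Finset Fml} (x : ℕ) (φ : Fml) (t : Tm) :
      G3P R Γ (insert (Fml.ex x φ) (insert (Fml.subst t x φ) Δ)) →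
      G3P R Γ (insert (Fml.ex x φ) Δ)
  | er {Γ' Γ Δ : Finset Fml} :
      ERStep R Γ' Γ Δ → G3P R Γ' Δ → G3P R Γ Δ

/-- `R`-validity of the formula interpretation `f(Γ ⊢ Δ) = ⋀Γ → ⋁Δ` of a sequent:
    it is satisfied by every interpretation that models `R` (under every assignment). -/
def SeqValid (R : Set ERule) (Γ Δ : Finset Fml) : Prop :=
  ∀ I : Set Atom, IsInterp I → (∀ ρ ∈ R, SatRule I ρ) →
    ∀ μ : ℕ → Tm, IsAsg (itms I) μ → (∀ φ ∈ Γ, Sat I μ φ) → ∃ ψ ∈ Δ, Sat I μ ψ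

/- ## Triggers and the chase -/

/-- `τ = (ρ,μ)` is a trigger in `I`. -/
def IsTrigger (I : Set Atom) (ρ : ERule) (μ : ℕ → Tm) : Prop :=
  IsAsg (itms I) μ ∧ ∀ a ∈ ρ.body, Atom.subst μ a ∈ I

/-- `ν` extends `μ` by mapping the existential variables `z⃗` injectively to fresh variables
    not occurring in `I`. -/
def FreshExt (I : Set Atom) (ρ : ERule) (μ ν : ℕ → Tm) : Prop :=
  (∀ x : ℕ, x ∉ ρ.evars → ν x = μ x) ∧
  (∀ z ∈ ρ.evars, ∃ v : ℕ, ν z = Tm.var v ∧ Tm.var v ∉ itms I) ∧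
  (∀ z ∈ ρ.evars, ∀ z' ∈ ρ.evars, ν z = ν z' → z = z')

/-- `I' = τ(I) = I ∪ α(μ(y⃗),z⃗)` is an application of the trigger `τ = (ρ,μ)`
    (with fresh variables chosen via `ν`). -/
def TriggerApp (I : Set Atom) (ρ : ERule) (μ ν : ℕ → Tm) (I' : Set Atom) : Prop :=
  FreshExt I ρ μ ν ∧ I' = I ∪ (Atom.subst ν) '' (↑ρ.head : Set Atom)

/-- One step of a chase derivation using a rule from `R`. -/
def ChaseStep (R : Set ERule) (I I' : Set Atom) : Prop :=
  ∃ ρ ∈ R, ∃ μ ν : ℕ → Tm, IsTrigger I ρ μ ∧ TriggerApp I ρ μ ν I'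

/-- The one-step chase `Ch₁(I,R) = ⋃_{τ trigger in I} τ(I)`: every trigger of `I` is applied,
    with fresh variables chosen so that distinct applications introduce distinct fresh
    variables (applications sharing a fresh variable produce the same head instantiation). -/
def OneStepChase (R : Set ERule) (I J : Set Atom) : Prop :=
  ∃ T : Set (ERule × (ℕ → Tm) × (ℕ → Tm)),
    (∀ p ∈ T, p.1 ∈ R ∧ IsTrigger I p.1 p.2.1 ∧ FreshExt I p.1 p.2.1 p.2.2) ∧
    (∀ ρ ∈ R, ∀ μ : ℕ → Tm, IsTrigger I ρ μ → ∃ ν : ℕ → Tm, (ρ, μ, ν) ∈ T) ∧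
    (∀ p ∈ T, ∀ p' ∈ T,
      (∃ z ∈ p.1.evars, ∃ z' ∈ p'.1.evars, p.2.2 z = p'.2.2 z') →
      (Atom.subst p.2.2) '' (↑p.1.head : Set Atom) =
        (Atom.subst p'.2.2) '' (↑p'.1.head : Set Atom)) ∧
    J = I ∪ ⋃ p ∈ T, (Atom.subst p.2.2) '' (↑p.1.head : Set Atom)

/-- `K n = Ch_n(D,R)`: the breadth-first chase sequence starting from the database `D`;
    `Ch_∞(D,R) = mfy (⋃ n, K n)`. -/
def ChaseSeq (R : Set ERule) (D : Finset Atom) (K : ℕ → Set Atom) : Prop :=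
  K 0 = (↑D : Set Atom) ∧ ∀ n : ℕ, OneStepChase R (K n) (K (n + 1))

/- ## Homomorphisms -/

/-- A homomorphism from instance `I` to instance `J`. -/
def IsHom (I J : Set Atom) (h : Tm → Tm) : Prop :=
  (∀ c : ℕ, h (Tm.const c) = Tm.const c) ∧ ∀ a ∈ I, Atom.map h a ∈ J

/- ## Proof search -/

/-- A bottom-up application of `(∧R)` (passing to one premise): conclusion `Γ ⊢ Δ`,
    premise `Γ' ⊢ Δ'`. -/
def AndRStep (Γ Δ Γ' Δ' : Finset Fml) : Prop :=
  Γ' = Γ ∧ ∃ φ ψ : Fml, Fml.and φ ψ ∈ Δ ∧ (Δ' = insert φ Δ ∨ Δ' = insert ψ Δ)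

/-- A bottom-up application of `(∃R)`: conclusion `Γ ⊢ Δ`, premise `Γ' ⊢ Δ'`. -/
def ExRStep (Γ Δ Γ' Δ' : Finset Fml) : Prop :=
  Γ' = Γ ∧ ∃ (x : ℕ) (φ : Fml) (t : Tm), Fml.ex x φ ∈ Δ ∧ Δ' = insert (Fml.subst t x φ) Δ

/-- The atoms occurring as elements of a set of formulas. -/
def atomsOf (S : Set Fml) : Set Atom := {a : Atom | a.toFml ∈ S}

/-- A failed fair proof-search branch for the input sequent `D ⊢ ∃x⃗ q(x⃗)`:
    an infinite sequence of sequents, each obtained from the previous by a bottom-up application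
    of `(∧R)`, `(∃R)` or `s(ρ)` with `ρ ∈ R`, on which no sequent is an instance of `(id)` and
    whose limit satisfies the saturation conditions. -/
structure FailedBranch (R : Set ERule) (D : Finset Atom) (q : Fml) where
  Γ : ℕ → Finset Fml
  Δ : ℕ → Finset Fml
  init_left : Γ 0 = D.image Atom.toFml
  init_right : Δ 0 = {q}
  step : ∀ i : ℕ,
    AndRStep (Γ i) (Δ i) (Γ (i + 1)) (Δ (i + 1)) ∨
    ExRStep (Γ i) (Δ i) (Γ (i + 1)) (Δ (i + 1)) ∨
    (Δ (i + 1) = Δ i ∧ ERStep R (Γ (i + 1)) (Γ i) (Δ i))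
  noax : ∀ i : ℕ, ∀ (p : ℕ) (ts : List Tm), Fml.atom p ts ∈ Γ i → Fml.atom p ts ∉ Δ i
  sat_and : ∀ φ ψ : Fml, Fml.and φ ψ ∈ (⋃ i, (↑(Δ i) : Set Fml)) →
    φ ∈ (⋃ i, (↑(Δ i) : Set Fml)) ∨ ψ ∈ (⋃ i, (↑(Δ i) : Set Fml))
  sat_ex : ∀ (x : ℕ) (φ : Fml), Fml.ex x φ ∈ (⋃ i, (↑(Δ i) : Set Fml)) →
    ∀ t ∈ tmsOf (⋃ i, (↑(Γ i) : Set Fml)), Fml.subst t x φ ∈ (⋃ i, (↑(Δ i) : Set Fml))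
  sat_er : ∀ ρ ∈ R, ∀ μ : ℕ → Tm, IsAsg (tmsOf (⋃ i, (↑(Γ i) : Set Fml))) μ →
    (∀ a ∈ ρ.body, (Atom.subst μ a).toFml ∈ (⋃ i, (↑(Γ i) : Set Fml))) →
    ∃ ν : ℕ → Tm, (∀ x : ℕ, x ∉ ρ.evars → ν x = μ x) ∧
      (∀ z ∈ ρ.evars, ν z ∈ tmsOf (⋃ i, (↑(Γ i) : Set Fml))) ∧
      ∀ a ∈ ρ.head, (Atom.subst ν a).toFml ∈ (⋃ i, (↑(Γ i) : Set Fml))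

lemma sat_fv_congr (I : Set Atom) : ∀ (φ : Fml) (μ ν : ℕ → Tm),
    (∀ x ∈ φ.fv, μ x = ν x) → (Sat I μ φ ↔ Sat I ν φ)
  | Fml.atom p ts, μ, ν, h => by
      simp only [Sat]
      have : ts.map (Tm.app μ) = ts.map (Tm.app ν) := by
        apply List.map_congr_left
        intro t ht
        cases t with
        | const c => rfl
        | var x => exact h x ht
      rw [this]
  | Fml.not φ, μ, ν, h => by
      simp only [Sat]
      rw [sat_fv_congr I φ μ ν h]
  | Fml.and φ ψ, μ, ν, h => by
      simp only [Sat]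
      rw [sat_fv_congr I φ μ ν (fun x hx => h x (Set.mem_union_left _ hx)),
          sat_fv_congr I ψ μ ν (fun x hx => h x (Set.mem_union_right _ hx))]
  | Fml.ex y φ, μ, ν, h => by
      simp only [Sat]
      have key : ∀ t, (∀ x ∈ φ.fv, Function.update μ y t x = Function.update ν y t x) := by
        intro t x hx
        by_cases hxy : x = y
        · subst hxy; simp
        · simp only [Function.update, dif_neg hxy]
          exact h x ⟨hx, hxy⟩
      constructor <;> rintro ⟨t, ht, hs⟩ <;> refine ⟨t, ht, ?_⟩
      · exact (sat_fv_congr I φ _ _ (key t)).1 hs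
      · exact (sat_fv_congr I φ _ _ (key t)).2 hs

lemma sat_atom_iff (I : Set Atom) (μ : ℕ → Tm) (a : Atom) :
    Sat I μ a.toFml ↔ Atom.subst μ a ∈ I := Iff.rfl

/-- soundness of the rule `s(ρ)`: if the existential variables `z⃗` of
    `ρ ∈ R` do not occur in `Γ` or `Δ` (they do not occur in the body by definition of an
    existential rule), and `f(Γ, β(x⃗,y⃗), α(y⃗,z⃗) ⊢ Δ)` is `R`-valid, then
    `f(Γ, β(x⃗,y⃗) ⊢ Δ)` is `R`-valid. -/
theorem er_rule_sound (R : Set ERule) (hR : R.Finite) (ρ : ERule) (hρ : ρ ∈ R)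
    (Γ Δ : Finset Fml)
    (hzΓ : ∀ z ∈ ρ.evars, ∀ χ ∈ Γ, z ∉ χ.fv)
    (hzΔ : ∀ z ∈ ρ.evars, ∀ χ ∈ Δ, z ∉ χ.fv)
    (h : SeqValid R (Γ ∪ ρ.body.image Atom.toFml ∪ ρ.head.image Atom.toFml) Δ) :
    SeqValid R (Γ ∪ ρ.body.image Atom.toFml) Δ := by
  intro I hI hRsat μ hμ hΓ
  have hbody : ∀ a ∈ ρ.body, Atom.subst μ a ∈ I := by
    intro a ha
    exact hΓ a.toFml (Finset.mem_union_right _ (Finset.mem_image_of_mem _ ha))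
  obtain ⟨ν, hν, hagree, hhead⟩ := hRsat ρ hρ μ hμ hbody
  have hΓν : ∀ φ ∈ Γ ∪ ρ.body.image Atom.toFml ∪ ρ.head.image Atom.toFml, Sat I ν φ := by
    intro φ hφ
    rcases Finset.mem_union.1 hφ with hφ | hφ
    · rcases Finset.mem_union.1 hφ with hφ | hφ
      · refine (sat_fv_congr I φ μ ν ?_).1 (hΓ φ (Finset.mem_union_left _ hφ))
        intro x hx
        exact (hagree x (fun hxe => hzΓ x hxe φ hφ hx)).symm
      · obtain ⟨a, ha, rfl⟩ := Finset.mem_image.1 hφ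
        refine (sat_fv_congr I a.toFml μ ν ?_).1
          (hΓ a.toFml (Finset.mem_union_right _ (Finset.mem_image_of_mem _ ha)))
        intro x hx
        refine (hagree x (fun hxe => ?_)).symm
        exact ρ.body_evars a ha x hxe hx
    · obtain ⟨a, ha, rfl⟩ := Finset.mem_image.1 hφ
      exact (sat_atom_iff I ν a).2 (hhead a ha)
  obtain ⟨ψ, hψ, hs⟩ := h I hI hRsat ν hν hΓν
  refine ⟨ψ, hψ, (sat_fv_congr I ψ μ ν ?_).2 hs⟩
  intro x hx
  exact (hagree x (fun hxe => hzΔ x hxe ψ hψ hx)).symm
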